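/- arXiv:2412.00985 — 2 statements merged into one kernel-verified Lean document; each statement's English description precedes it below -/
import Mathlib

section
/- Let $\mathcal{G}$ be a finite-horizon partially observable stochastic game with $n$ agents satisfying the multi-agent deterministic filter condition (each agent can decode the state from its common plus private information with probability 1). Let $\pi \in \Pi_{\mathcal{S}}$ be a joint Markov state-based policy and let $\hat{\phi} = \{\hat{\phi}_{i,h}\}$ be deterministic decoding functions $\hat{\phi}_{i,h} : \mathcal{C}_h \times \mathcal{P}_{i,h} \to \mathcal{S}$. Let $\pi^{\hat{\phi}}$ be the distilled policy where each agent decodes via $\hat{\phi}_{i,h}$ and then acts via $\pi_{i,h}$. Then for each agent $i$, with rewards in $[0,1]$ per step: $v_i(\pi) - v_i(\pi^{\hat{\phi}}) \leq H \cdot \mathbb{P}^{\pi, \mathcal{G}}(\exists\, j \in [n],\, h \in [H] : s_h \neq \hat{\phi}_{j,h}(c_h, p_{j,h}))$. -/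
/-!
On every trajectory where all decoders return the true state, the distilled policy
takes each action with the same probability as the state-based one, so the two
trajectory distributions agree off the bad event `B`. Since the cumulative reward
lies in `[0, H]`, the value gap is at most `H · ℙ^π(B)`.
-/

open Finset

section POMDP

variable {St Ob Ac : Type*}

/-- Extend a `Fin H`-indexed sequence to `ℕ` by a default value. -/
def extN {α : Type*} [Inhabited α] {H : ℕ} (f : Fin H → α) : ℕ → α :=
  fun k => if hk : k < H then f ⟨k, hk⟩ else default

/-- A general history-and-state-dependent (randomized) policy: at each step it
assigns a probability to each action, given the full trajectory so far. -/
abbrev GPolicy (St Ob Ac : Type*) := ℕ → (ℕ → St) → (ℕ → Ob) → (ℕ → Ac) → Ac → ℝ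

/-- A policy is causal if its choice at step `h` depends only on states and
observations up to step `h` and actions before step `h`. -/
def CausalPolicy (H : ℕ) (π : GPolicy St Ob Ac) : Prop :=
  ∀ h, h < H → ∀ (s s' : ℕ → St) (o o' : ℕ → Ob) (a a' : ℕ → Ac),
    (∀ k, k ≤ h → s k = s' k) → (∀ k, k ≤ h → o k = o' k) → (∀ k, k < h → a k = a' k) →
    π h s o a = π h s' o' a'

/-- A valid general policy: causal, and a probability distribution over actions
at every step. -/
def IsPolicy [Fintype Ac] (H : ℕ) (π : GPolicy St Ob Ac) : Prop :=
  CausalPolicy H π ∧ ∀ h s o a, (∀ b, 0 ≤ π h s o a b) ∧ ∑ b, π h s o a b = 1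

/-- Probability of a (ℕ-indexed) trajectory `(s, o, a)` of a finite-horizon POMDP
`(μ, T, Obs)` of horizon `H` under policy `π`. -/
noncomputable def trajProbN (H : ℕ) (μ : St → ℝ) (T : ℕ → St → Ac → St → ℝ)
    (Obs : ℕ → St → Ob → ℝ) (π : GPolicy St Ob Ac)
    (s : ℕ → St) (o : ℕ → Ob) (a : ℕ → Ac) : ℝ :=
  μ (s 0) * ∏ h ∈ Finset.range H,
    (Obs h (s h) (o h) * π h s o a (a h) *
      (if h + 1 < H then T h (s h) (a h) (s (h + 1)) else 1))

/-- Model-probability of a trajectory (with the policy factors removed): positive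
exactly on trajectories reachable under some general policy. -/
noncomputable def modelProbN (H : ℕ) (μ : St → ℝ) (T : ℕ → St → Ac → St → ℝ)
    (Obs : ℕ → St → Ob → ℝ) (s : ℕ → St) (o : ℕ → Ob) (a : ℕ → Ac) : ℝ :=
  μ (s 0) * ∏ h ∈ Finset.range H,
    (Obs h (s h) (o h) * (if h + 1 < H then T h (s h) (a h) (s (h + 1)) else 1))

/-- A full trajectory `(s_{1:H}, o_{1:H}, a_{1:H})` of a horizon-`H` POMDP. -/
abbrev Traj (H : ℕ) (St Ob Ac : Type*) := (Fin H → St) × (Fin H → Ob) × (Fin H → Ac)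

/-- Probability of a full trajectory. -/
noncomputable def trajProb [Inhabited St] [Inhabited Ob] [Inhabited Ac]
    (H : ℕ) (μ : St → ℝ) (T : ℕ → St → Ac → St → ℝ) (Obs : ℕ → St → Ob → ℝ)
    (π : GPolicy St Ob Ac) (t : Traj H St Ob Ac) : ℝ :=
  trajProbN H μ T Obs π (extN t.1) (extN t.2.1) (extN t.2.2)

/-- Expected cumulative reward (value) of a policy `π`. -/
noncomputable def pvalue [Fintype St] [Fintype Ob] [Fintype Ac]
    [Inhabited St] [Inhabited Ob] [Inhabited Ac]
    (H : ℕ) (μ : St → ℝ) (T : ℕ → St → Ac → St → ℝ) (Obs : ℕ → St → Ob → ℝ)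
    (r : ℕ → St → Ac → ℝ) (π : GPolicy St Ob Ac) : ℝ :=
  ∑ t : Traj H St Ob Ac,
    trajProb H μ T Obs π t * ∑ h ∈ Finset.range H, r h (extN t.1 h) (extN t.2.2 h)

end POMDP

theorem Finset.sum_mul_sub_sum_mul_le_of_eq_off {ι : Type*} [Fintype ι]
    (f g R : ι → ℝ) (c : ℝ) (B : Finset ι) (hfg : ∀ t ∉ B, f t = g t)
    (hf : ∀ t, 0 ≤ f t) (hg : ∀ t, 0 ≤ g t) (hR0 : ∀ t, 0 ≤ R t) (hRc : ∀ t, R t ≤ c) :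
    ∑ t, f t * R t - ∑ t, g t * R t ≤ c * ∑ t ∈ B, f t := by
  rw [← Finset.sum_sub_distrib,
    ← Finset.sum_subset (Finset.subset_univ B) (fun t _ ht => by rw [hfg t ht, sub_self]),
    Finset.mul_sum]
  refine Finset.sum_le_sum fun t _ => ?_
  have hgR := mul_nonneg (hg t) (hR0 t)
  have hfR := mul_le_mul_of_nonneg_left (hRc t) (hf t)
  linarith

section POMDP

variable {St Ob Ac : Type*}

theorem trajProbN_nonneg (H : ℕ) {μ : St → ℝ} {T : ℕ → St → Ac → St → ℝ}
    {Obs : ℕ → St → Ob → ℝ} {π : GPolicy St Ob Ac} (hμ0 : ∀ x, 0 ≤ μ x)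
    (hT0 : ∀ h x u y, 0 ≤ T h x u y) (hO0 : ∀ h x o, 0 ≤ Obs h x o)
    (hπ0 : ∀ h s o a b, 0 ≤ π h s o a b) (s : ℕ → St) (o : ℕ → Ob) (a : ℕ → Ac) :
    0 ≤ trajProbN H μ T Obs π s o a := by
  refine mul_nonneg (hμ0 _) (Finset.prod_nonneg fun h _ => ?_)
  refine mul_nonneg (mul_nonneg (hO0 _ _ _) (hπ0 _ _ _ _ _)) ?_
  split_ifs
  exacts [hT0 _ _ _ _, zero_le_one]

theorem trajProbN_congr_policy (H : ℕ) (μ : St → ℝ) (T : ℕ → St → Ac → St → ℝ)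
    (Obs : ℕ → St → Ob → ℝ) {π π' : GPolicy St Ob Ac} {s : ℕ → St} {o : ℕ → Ob}
    {a : ℕ → Ac} (hπ : ∀ h < H, π h s o a (a h) = π' h s o a (a h)) :
    trajProbN H μ T Obs π s o a = trajProbN H μ T Obs π' s o a := by
  unfold trajProbN
  congr 1
  refine Finset.prod_congr rfl fun h hh => ?_
  rw [hπ h (Finset.mem_range.mp hh)]

theorem pvalue_sub_le_mul_sum_trajProb [Fintype St] [Fintype Ob] [Fintype Ac]
    [Inhabited St] [Inhabited Ob] [Inhabited Ac] (H : ℕ) {μ : St → ℝ}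
    {T : ℕ → St → Ac → St → ℝ} {Obs : ℕ → St → Ob → ℝ} {r : ℕ → St → Ac → ℝ}
    (hμ0 : ∀ x, 0 ≤ μ x) (hT0 : ∀ h x u y, 0 ≤ T h x u y) (hO0 : ∀ h x o, 0 ≤ Obs h x o)
    (hr0 : ∀ h x u, 0 ≤ r h x u) (hr1 : ∀ h x u, r h x u ≤ 1)
    {π π' : GPolicy St Ob Ac} (hπ0 : ∀ h s o a b, 0 ≤ π h s o a b)
    (hπ'0 : ∀ h s o a b, 0 ≤ π' h s o a b) (B : Finset (Traj H St Ob Ac))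
    (hπ : ∀ t ∉ B, ∀ h < H, π h (extN t.1) (extN t.2.1) (extN t.2.2) (extN t.2.2 h) =
      π' h (extN t.1) (extN t.2.1) (extN t.2.2) (extN t.2.2 h)) :
    pvalue H μ T Obs r π - pvalue H μ T Obs r π' ≤
      H * ∑ t ∈ B, trajProb H μ T Obs π t := by
  refine Finset.sum_mul_sub_sum_mul_le_of_eq_off _ _ _ _ B
    (fun t ht => trajProbN_congr_policy H μ T Obs (hπ t ht))
    (fun _ => trajProbN_nonneg H hμ0 hT0 hO0 hπ0 _ _ _)
    (fun _ => trajProbN_nonneg H hμ0 hT0 hO0 hπ'0 _ _ _)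
    (fun _ => Finset.sum_nonneg fun _ _ => hr0 _ _ _) (fun t => ?_)
  calc ∑ h ∈ range H, r h (extN t.1 h) (extN t.2.2 h)
      ≤ ∑ _h ∈ range H, (1 : ℝ) := Finset.sum_le_sum fun _ _ => hr1 _ _ _
    _ = H := by simp

end POMDP

open Classical in
theorem stmt_13_general {St Ob C : Type*} {n : ℕ} {AcI : Fin n → Type*} {PI : Fin n → Type*}
    [Fintype St] [Fintype Ob] [∀ i, Fintype (AcI i)]
    [Inhabited St] [Inhabited Ob] [∀ i, Inhabited (AcI i)]
    (H : ℕ)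
    (μ : St → ℝ) (T : ℕ → St → (∀ i, AcI i) → St → ℝ) (Obs : ℕ → St → Ob → ℝ)
    (hμ0 : ∀ x, 0 ≤ μ x)
    (hT0 : ∀ h x u y, 0 ≤ T h x u y)
    (hO0 : ∀ h x o, 0 ≤ Obs h x o)
    -- common- and private-information maps (fixed causal functions of the history)
    (fC : ℕ → (ℕ → Ob) → (ℕ → ∀ i, AcI i) → C)
    (fP : ∀ i : Fin n, ℕ → (ℕ → Ob) → (ℕ → ∀ i, AcI i) → PI i)
    -- rewards of each agent, in [0,1]
    (r : Fin n → ℕ → St → (∀ i, AcI i) → ℝ)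
    (hr0 : ∀ i h x u, 0 ≤ r i h x u) (hr1 : ∀ i h x u, r i h x u ≤ 1)
    -- joint Markov state-based (product) policy
    (π : ∀ i : Fin n, ℕ → St → AcI i → ℝ)
    (hπ0 : ∀ i h x b, 0 ≤ π i h x b)
    -- arbitrary deterministic decoding functions used for distillation
    (φ : ∀ i : Fin n, ℕ → C → PI i → St) :
    ∀ i : Fin n,
      pvalue H μ T Obs (r i)
          (fun h s _o _a b => ∏ j, π j h (s h) (b j)) -
        pvalue H μ T Obs (r i)
          (fun h _s o a b => ∏ j, π j h (φ j h (fC h o a) (fP j h o a)) (b j)) ≤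
      (H : ℝ) * ∑ t ∈ Finset.univ.filter (fun t : Traj H St Ob (∀ i, AcI i) =>
            ∃ j : Fin n, ∃ h, h < H ∧
              extN t.1 h ≠
                φ j h (fC h (extN t.2.1) (extN t.2.2)) (fP j h (extN t.2.1) (extN t.2.2))),
          trajProb H μ T Obs (fun h s _o _a b => ∏ j, π j h (s h) (b j)) t := by
  
  intro i
  refine pvalue_sub_le_mul_sum_trajProb H hμ0 hT0 hO0 (hr0 i) (hr1 i)
    (fun _ _ _ _ _ => prod_nonneg fun _ _ => hπ0 _ _ _ _)
    (fun _ _ _ _ _ => prod_nonneg fun _ _ => hπ0 _ _ _ _) _ fun t ht h hh => ?_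
  simp only [mem_filter, mem_univ, true_and, not_exists, not_and, not_not] at ht
  exact prod_congr rfl fun j _ => by rw [ht j h hh]

open Classical in
/-- Single-policy equilibrium distillation bound in a POSG with
information sharing satisfying the multi-agent deterministic filter condition:
for a joint Markov state-based policy `π` and deterministic decoding functions
`φ`, the value loss of each agent `i` when moving from `π` to the distilled
policy `π^φ` (each agent decodes the state from its common and private
information and then acts via `π`) is at most `H` times the probability, under
`π`, that some agent's decoder is wrong at some step. -/
theorem stmt_13 {St Ob C : Type*} {n : ℕ} {AcI : Fin n → Type*} {PI : Fin n → Type*}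
    [Fintype St] [Fintype Ob] [∀ i, Fintype (AcI i)]
    [Inhabited St] [Inhabited Ob] [∀ i, Inhabited (AcI i)]
    (H : ℕ) (hH : 0 < H)
    (μ : St → ℝ) (T : ℕ → St → (∀ i, AcI i) → St → ℝ) (Obs : ℕ → St → Ob → ℝ)
    (hμ0 : ∀ x, 0 ≤ μ x) (hμs : ∑ x, μ x = 1)
    (hT0 : ∀ h x u y, 0 ≤ T h x u y) (hTs : ∀ h x u, ∑ y, T h x u y = 1)
    (hO0 : ∀ h x o, 0 ≤ Obs h x o) (hOs : ∀ h x, ∑ o, Obs h x o = 1)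
    -- common- and private-information maps (fixed causal functions of the history)
    (fC : ℕ → (ℕ → Ob) → (ℕ → ∀ i, AcI i) → C)
    (fP : ∀ i : Fin n, ℕ → (ℕ → Ob) → (ℕ → ∀ i, AcI i) → PI i)
    (hfC : ∀ h (o o' : ℕ → Ob) (a a' : ℕ → ∀ i, AcI i),
      (∀ k, k ≤ h → o k = o' k) → (∀ k, k < h → a k = a' k) → fC h o a = fC h o' a')
    (hfP : ∀ i h (o o' : ℕ → Ob) (a a' : ℕ → ∀ i, AcI i),
      (∀ k, k ≤ h → o k = o' k) → (∀ k, k < h → a k = a' k) → fP i h o a = fP i h o' a')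
    -- rewards of each agent, in [0,1]
    (r : Fin n → ℕ → St → (∀ i, AcI i) → ℝ)
    (hr0 : ∀ i h x u, 0 ≤ r i h x u) (hr1 : ∀ i h x u, r i h x u ≤ 1)
    -- joint Markov state-based (product) policy
    (π : ∀ i : Fin n, ℕ → St → AcI i → ℝ)
    (hπ0 : ∀ i h x b, 0 ≤ π i h x b) (hπs : ∀ i h x, ∑ b, π i h x b = 1)
    -- multi-agent deterministic filter condition: each agent can decode the state
    -- from its information with probability one along reachable trajectories
    (trueφ : ∀ i : Fin n, ℕ → C → PI i → St)
    (hdf : ∀ (s : ℕ → St) (o : ℕ → Ob) (a : ℕ → ∀ i, AcI i),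
      modelProbN H μ T Obs s o a ≠ 0 →
        ∀ i : Fin n, ∀ h, h < H → s h = trueφ i h (fC h o a) (fP i h o a))
    -- arbitrary deterministic decoding functions used for distillation
    (φ : ∀ i : Fin n, ℕ → C → PI i → St) :
    ∀ i : Fin n,
      pvalue H μ T Obs (r i)
          (fun h s _o _a b => ∏ j, π j h (s h) (b j)) -
        pvalue H μ T Obs (r i)
          (fun h _s o a b => ∏ j, π j h (φ j h (fC h o a) (fP j h o a)) (b j)) ≤
      (H : ℝ) * ∑ t ∈ Finset.univ.filter (fun t : Traj H St Ob (∀ i, AcI i) =>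
            ∃ j : Fin n, ∃ h, h < H ∧
              extN t.1 h ≠
                φ j h (fC h (extN t.2.1) (extN t.2.2)) (fP j h (extN t.2.1) (extN t.2.2))),
          trajProb H μ T Obs (fun h s _o _a b => ∏ j, π j h (s h) (b j)) t :=
  stmt_13_general H μ T Obs hμ0 hT0 hO0 fC fP r hr0 hr1 π hπ0 φ
end

section
/- Let $\mathcal{G}$ be a POSG satisfying the deterministic filter condition, and suppose the per-step rewards lie in $[0,1]$. Given a joint Markov policy $\pi \in \Pi_{\mathcal{S}}$ and possibly stochastic decoding functions $\hat{g} = \{\hat{g}_{i,h}\}$, the NE/CCE gap of the distilled policy $\pi^{\hat{g}}$ satisfies $\mathrm{NE/CCE\text{-}gap}(\pi^{\hat{g}}) - \mathrm{NE/CCE\text{-}gap}(\pi) \leq 2 n H^2 \max_{i \in [n]} \max_{u_i \in \Pi_i} \max_{j \in [n], h \in [H]} \mathbb{P}^{u_i \times \pi_{-i}, \mathcal{G}}(s_h \neq \hat{g}_{j,h}(c_h, p_{j,h}))$. -/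
/-!
Couple each distilled policy with its state-based counterpart by letting every decoding agent
decode the true state. The trajectory weight of the state-based policy times the product of all
per-step decoding probabilities is dominated by both trajectory laws, so with rewards in `[0, 1]`
the two values differ by at most `H` times the probability that some decoding fails, and a union
bound over the at most `n H` agent-steps bounds this by `n H E`. This applies to a unilateral
deviation `u_i × π_{-i}` against its distilled version, and to `π` against `π^g`: by the
deterministic filter condition, `π` is itself the information-based deviation
`(π_i ∘ φ_i) × π_{-i}`, so `E` also bounds its decoding errors. The triangle inequality through
the gap `G` of `π` gives `G + 2 n H² E`.
-/

open Finset

section FiniteSums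

lemma one_sub_prod_le_sum_one_sub {ι : Type*} (K : Finset ι) (q : ι → ℝ)
    (h0 : ∀ k ∈ K, 0 ≤ q k) (h1 : ∀ k ∈ K, q k ≤ 1) :
    1 - ∏ k ∈ K, q k ≤ ∑ k ∈ K, (1 - q k) := by
  induction K using Finset.cons_induction with
  | empty => simp
  | cons k K hk IH =>
    rw [forall_mem_cons] at h0 h1
    rw [prod_cons, sum_cons]
    have hP1 : ∏ j ∈ K, q j ≤ 1 := prod_le_one h0.2 h1.2
    nlinarith [IH h0.2 h1.2, mul_nonneg (sub_nonneg.2 h1.1) (sub_nonneg.2 hP1)]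

lemma sum_mul_one_sub_prod_le {α ι : Type*} [Fintype α] (p : α → ℝ) (hp : ∀ x, 0 ≤ p x)
    (K : Finset ι) (q : ι → α → ℝ) (hq0 : ∀ k x, 0 ≤ q k x) (hq1 : ∀ k x, q k x ≤ 1) :
    ∑ x, p x * (1 - ∏ k ∈ K, q k x) ≤ ∑ k ∈ K, ∑ x, p x * (1 - q k x) := by
  rw [sum_comm]
  refine sum_le_sum fun x _ => ?_
  rw [← mul_sum]
  exact mul_le_mul_of_nonneg_left
    (one_sub_prod_le_sum_one_sub K _ (fun k _ => hq0 k x) (fun k _ => hq1 k x)) (hp x)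

lemma sum_mul_sub_sum_mul_le {α : Type*} [Fintype α] {p p' Q R : α → ℝ} {M : ℝ}
    (hp : ∑ x, p x = 1) (hQp : ∀ x, Q x ≤ p x) (hQp' : ∀ x, Q x ≤ p' x)
    (hR0 : ∀ x, 0 ≤ R x) (hRM : ∀ x, R x ≤ M) :
    ∑ x, p x * R x - ∑ x, p' x * R x ≤ M * (1 - ∑ x, Q x) :=
  calc ∑ x, p x * R x - ∑ x, p' x * R x
      ≤ ∑ x, p x * R x - ∑ x, Q x * R x :=
        sub_le_sub_left (sum_le_sum fun x _ => mul_le_mul_of_nonneg_right (hQp' x) (hR0 x)) _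
    _ = ∑ x, (p x - Q x) * R x := by simp only [← sum_sub_distrib, sub_mul]
    _ ≤ ∑ x, (p x - Q x) * M :=
        sum_le_sum fun x _ => mul_le_mul_of_nonneg_left (hRM x) (sub_nonneg.2 (hQp x))
    _ = M * (1 - ∑ x, Q x) := by rw [← sum_mul, sum_sub_distrib, hp, mul_comm]

lemma abs_sum_mul_sub_sum_mul_le {α : Type*} [Fintype α] {p p' Q R : α → ℝ} {M : ℝ}
    (hp : ∑ x, p x = 1) (hp' : ∑ x, p' x = 1) (hQp : ∀ x, Q x ≤ p x) (hQp' : ∀ x, Q x ≤ p' x)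
    (hR0 : ∀ x, 0 ≤ R x) (hRM : ∀ x, R x ≤ M) :
    |∑ x, p x * R x - ∑ x, p' x * R x| ≤ M * (1 - ∑ x, Q x) :=
  abs_sub_le_iff.2 ⟨sum_mul_sub_sum_mul_le hp hQp hQp' hR0 hRM,
    sum_mul_sub_sum_mul_le hp' hQp' hQp hR0 hRM⟩

lemma sum_product_le_card_mul {ι : Type*} [Fintype ι] {H : ℕ} (D : Finset ι) {f : ℕ × ι → ℝ}
    {E : ℝ} (hE0 : 0 ≤ E) (hf : ∀ k ∈ range H ×ˢ D, f k ≤ E) :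
    ∑ k ∈ range H ×ˢ D, f k ≤ Fintype.card ι * H * E :=
  calc ∑ k ∈ range H ×ˢ D, f k ≤ #(range H ×ˢ D) • E := sum_le_card_nsmul _ _ _ hf
    _ ≤ Fintype.card ι * H * E := by
      rw [nsmul_eq_mul, card_product, card_range]
      gcongr
      rw [mul_comm]
      exact_mod_cast Nat.mul_le_mul_right H D.card_le_univ

end FiniteSums

section Trajectories

variable {St Ob Ac : Type*}

lemma extN_of_lt {α : Type*} [Inhabited α] {H : ℕ} (f : Fin H → α) {k : ℕ} (hk : k < H) :
    extN f k = f ⟨k, hk⟩ := dif_pos hk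

lemma extN_snoc_of_lt {α : Type*} [Inhabited α] {H : ℕ} (f : Fin H → α) (x : α) {k : ℕ}
    (hk : k < H) : extN (Fin.snoc f x : Fin (H + 1) → α) k = extN f k := by
  rw [extN_of_lt _ (Nat.lt_succ_of_lt hk), extN_of_lt f hk]
  simp [Fin.snoc, hk]

lemma extN_snoc_self {α : Type*} [Inhabited α] {H : ℕ} (f : Fin H → α) (x : α) :
    extN (Fin.snoc f x : Fin (H + 1) → α) H = x := by
  rw [extN_of_lt _ (Nat.lt_succ_self H)]
  simp [Fin.snoc]

lemma sum_fun_snoc {α β : Type*} [Fintype α] [AddCommMonoid β] {H : ℕ}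
    (F : (Fin (H + 1) → α) → β) :
    ∑ f : Fin (H + 1) → α, F f = ∑ f : Fin H → α, ∑ x : α, F (Fin.snoc f x) := by
  rw [← (Fin.snocEquiv fun _ => α).sum_comp, Fintype.sum_prod_type, sum_comm]
  rfl

lemma CausalPolicy.mono {H H' : ℕ} {π : GPolicy St Ob Ac} (hπ : CausalPolicy H' π)
    (hHH' : H ≤ H') : CausalPolicy H π :=
  fun h hh => hπ h (lt_of_lt_of_le hh hHH')

variable {μ : St → ℝ} {T : ℕ → St → Ac → St → ℝ} {Obs : ℕ → St → Ob → ℝ}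

lemma trajProbN_eq_modelProbN_mul (H : ℕ) (π : GPolicy St Ob Ac)
    (s : ℕ → St) (o : ℕ → Ob) (a : ℕ → Ac) :
    trajProbN H μ T Obs π s o a
      = modelProbN H μ T Obs s o a * ∏ h ∈ range H, π h s o a (a h) := by
  rw [trajProbN, modelProbN, mul_assoc, ← prod_mul_distrib]
  exact congrArg (μ (s 0) * ·) (prod_congr rfl fun h _ => by ring)

lemma trajProbN_succ_succ (m : ℕ) (π : GPolicy St Ob Ac) (s : ℕ → St) (o : ℕ → Ob)
    (a : ℕ → Ac) :
    trajProbN (m + 2) μ T Obs π s o a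
      = trajProbN (m + 1) μ T Obs π s o a * T m (s m) (a m) (s (m + 1)) *
          (Obs (m + 1) (s (m + 1)) (o (m + 1)) * π (m + 1) s o a (a (m + 1))) := by
  have hlow : ∀ h ∈ range m,
      (Obs h (s h) (o h) * π h s o a (a h) *
        (if h + 1 < m + 2 then T h (s h) (a h) (s (h + 1)) else 1))
      = Obs h (s h) (o h) * π h s o a (a h) *
        (if h + 1 < m + 1 then T h (s h) (a h) (s (h + 1)) else 1) := by
    intro h hh
    rw [mem_range] at hh
    rw [if_pos (by omega), if_pos (by omega)]
  simp only [trajProbN, prod_range_succ _ (m + 1), prod_range_succ _ m, prod_congr rfl hlow,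
    if_pos (show m + 1 < m + 2 by omega), if_neg (show ¬ m + 1 < m + 1 by omega),
    if_neg (show ¬ m + 1 + 1 < m + 2 by omega)]
  ring

lemma CausalPolicy.trajProbN_congr {H : ℕ} {π : GPolicy St Ob Ac} (hπ : CausalPolicy H π)
    (hH : 0 < H) {s s' : ℕ → St} {o o' : ℕ → Ob} {a a' : ℕ → Ac}
    (hs : ∀ k < H, s k = s' k) (ho : ∀ k < H, o k = o' k) (ha : ∀ k < H, a k = a' k) :
    trajProbN H μ T Obs π s o a = trajProbN H μ T Obs π s' o' a' := by
  unfold trajProbN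
  rw [hs 0 hH]
  refine congrArg _ (prod_congr rfl fun h hh => ?_)
  rw [mem_range] at hh
  have hπh : π h s o a = π h s' o' a' := hπ h hh s s' o o' a a'
    (fun k hk => hs k (by omega)) (fun k hk => ho k (by omega)) (fun k hk => ha k (by omega))
  rw [hs h hh, ho h hh, ha h hh, hπh]
  split
  · rw [hs (h + 1) ‹_›]
  · rfl

lemma trajProbN_congr_of_reachable {H : ℕ} {P P' : GPolicy St Ob Ac}
    {s : ℕ → St} {o : ℕ → Ob} {a : ℕ → Ac}
    (hPP' : modelProbN H μ T Obs s o a ≠ 0 → ∀ h < H, P h s o a (a h) = P' h s o a (a h)) :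
    trajProbN H μ T Obs P s o a = trajProbN H μ T Obs P' s o a := by
  rw [trajProbN_eq_modelProbN_mul, trajProbN_eq_modelProbN_mul]
  by_cases hm : modelProbN H μ T Obs s o a = 0
  · rw [hm, zero_mul, zero_mul]
  · rw [prod_congr rfl fun h hh => hPP' hm h (mem_range.1 hh)]

lemma IsPolicy.sum_eq_one_of_agree [Fintype Ac] {H : ℕ} {π : GPolicy St Ob Ac}
    (hπ : IsPolicy H π) {h : ℕ} (hh : h < H) (s : ℕ → St) (o : ℕ → Ob) (a : Ac → ℕ → Ac)
    (a₀ : ℕ → Ac) (ha : ∀ z, ∀ k < h, a z k = a₀ k) :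
    ∑ z, π h s o (a z) z = 1 := by
  rw [← (hπ.2 h s o a₀).2]
  exact sum_congr rfl fun z _ => by
    rw [hπ.1 h hh s s o o (a z) a₀ (fun _ _ => rfl) (fun _ _ => rfl) (ha z)]

variable [Fintype St] [Fintype Ob]

structure IsPOMDP (μ : St → ℝ) (T : ℕ → St → Ac → St → ℝ) (Obs : ℕ → St → Ob → ℝ) : Prop where
  init_nonneg : ∀ x, 0 ≤ μ x
  sum_init : ∑ x, μ x = 1
  trans_nonneg : ∀ h x u y, 0 ≤ T h x u y
  sum_trans : ∀ h x u, ∑ y, T h x u y = 1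
  obs_nonneg : ∀ h x o, 0 ≤ Obs h x o
  sum_obs : ∀ h x, ∑ o, Obs h x o = 1

lemma IsPOMDP.modelProbN_nonneg (hM : IsPOMDP μ T Obs) (H : ℕ)
    (s : ℕ → St) (o : ℕ → Ob) (a : ℕ → Ac) : 0 ≤ modelProbN H μ T Obs s o a := by
  refine mul_nonneg (hM.init_nonneg _) (prod_nonneg fun h _ => mul_nonneg (hM.obs_nonneg _ _ _) ?_)
  split
  · exact hM.trans_nonneg _ _ _ _
  · exact zero_le_one

lemma IsPOMDP.trajProbN_mul_prod_le (hM : IsPOMDP μ T Obs) {H : ℕ} {P P' : GPolicy St Ob Ac}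
    {s : ℕ → St} {o : ℕ → Ob} {a : ℕ → Ac} {w : ℕ → ℝ} (hw : ∀ h, 0 ≤ w h)
    (hP' : ∀ h, 0 ≤ P' h s o a (a h)) (hle : ∀ h < H, P' h s o a (a h) * w h ≤ P h s o a (a h)) :
    trajProbN H μ T Obs P' s o a * ∏ h ∈ range H, w h ≤ trajProbN H μ T Obs P s o a := by
  rw [trajProbN_eq_modelProbN_mul, trajProbN_eq_modelProbN_mul, mul_assoc, ← prod_mul_distrib]
  exact mul_le_mul_of_nonneg_left (prod_le_prod (fun h _ => mul_nonneg (hP' h) (hw h))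
    fun h hh => hle h (mem_range.1 hh)) (hM.modelProbN_nonneg H s o a)

variable [Fintype Ac]

lemma sum_traj_succ {β : Type*} [AddCommMonoid β] {H : ℕ}
    (F : Traj (H + 1) St Ob Ac → β) :
    ∑ t, F t = ∑ t : Traj H St Ob Ac, ∑ x, ∑ y, ∑ z,
      F (Fin.snoc t.1 x, Fin.snoc t.2.1 y, Fin.snoc t.2.2 z) := by
  simp only [Fintype.sum_prod_type, sum_fun_snoc]
  refine sum_congr rfl fun s _ => ?_
  rw [sum_comm]
  refine sum_congr rfl fun o _ => ?_
  rw [eq_comm, sum_comm]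
  exact sum_congr rfl fun x _ => by rw [sum_comm]

variable [Inhabited St] [Inhabited Ob] [Inhabited Ac]

lemma IsPOMDP.sum_trajProb_snoc (hM : IsPOMDP μ T Obs) {m : ℕ} {π : GPolicy St Ob Ac}
    (hπ : IsPolicy (m + 2) π) (t : Traj (m + 1) St Ob Ac) :
    ∑ x, ∑ y, ∑ z, trajProb (m + 2) μ T Obs π (Fin.snoc t.1 x, Fin.snoc t.2.1 y, Fin.snoc t.2.2 z)
      = trajProb (m + 1) μ T Obs π t := by
  have hcausal : CausalPolicy (m + 1) π := hπ.1.mono (by omega)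
  have hfactor : ∀ x y z,
      trajProb (m + 2) μ T Obs π (Fin.snoc t.1 x, Fin.snoc t.2.1 y, Fin.snoc t.2.2 z)
        = trajProb (m + 1) μ T Obs π t * T m (extN t.1 m) (extN t.2.2 m) x *
          (Obs (m + 1) x y * π (m + 1) (extN (Fin.snoc t.1 x)) (extN (Fin.snoc t.2.1 y))
            (extN (Fin.snoc t.2.2 z)) z) := by
    intro x y z
    rw [trajProb, trajProbN_succ_succ, hcausal.trajProbN_congr m.succ_pos
      (fun k hk => extN_snoc_of_lt _ _ hk) (fun k hk => extN_snoc_of_lt _ _ hk)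
      (fun k hk => extN_snoc_of_lt _ _ hk), extN_snoc_of_lt t.1 x m.lt_succ_self,
      extN_snoc_of_lt t.2.2 z m.lt_succ_self, extN_snoc_self, extN_snoc_self, extN_snoc_self]
    rfl
  have hlast : ∀ x y, ∑ z, π (m + 1) (extN (Fin.snoc t.1 x)) (extN (Fin.snoc t.2.1 y))
      (extN (Fin.snoc t.2.2 z)) z = 1 := fun x y =>
    hπ.sum_eq_one_of_agree (by omega) _ _ _ (extN t.2.2) fun z k hk => extN_snoc_of_lt _ _ hk
  simp only [hfactor, ← mul_sum, hlast, mul_one, hM.sum_obs, hM.sum_trans]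

lemma IsPOMDP.sum_trajProb_eq_one (hM : IsPOMDP μ T Obs) {H : ℕ} (hH : 0 < H)
    {π : GPolicy St Ob Ac} (hπ : IsPolicy H π) : ∑ t, trajProb H μ T Obs π t = 1 := by
  obtain ⟨m, rfl⟩ : ∃ m, H = m + 1 := ⟨H - 1, by omega⟩
  induction m with
  | zero =>
    have hlast : ∀ (t : Traj 0 St Ob Ac) x y, ∑ z, π 0 (extN (Fin.snoc t.1 x : Fin 1 → St))
        (extN (Fin.snoc t.2.1 y : Fin 1 → Ob)) (extN (Fin.snoc t.2.2 z : Fin 1 → Ac)) z = 1 :=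
      fun t x y => by
        simpa [extN_snoc_self] using hπ.sum_eq_one_of_agree one_pos _ _ _ default (by simp)
    rw [sum_traj_succ]
    simp only [Fintype.sum_prod_type, Fintype.sum_unique, trajProb, trajProbN, zero_add,
      prod_range_one, extN_snoc_self, lt_irrefl, if_false, mul_one, ← mul_sum, hlast,
      hM.sum_obs, hM.sum_init]
  | succ m ih =>
    rw [sum_traj_succ]
    simp only [hM.sum_trajProb_snoc hπ]
    exact ih (by omega) ⟨hπ.1.mono (by omega), hπ.2⟩

lemma IsPOMDP.trajProb_nonneg (hM : IsPOMDP μ T Obs) {H : ℕ} {π : GPolicy St Ob Ac}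
    (hπ : IsPolicy H π) (t : Traj H St Ob Ac) : 0 ≤ trajProb H μ T Obs π t := by
  rw [trajProb, trajProbN_eq_modelProbN_mul]
  exact mul_nonneg (hM.modelProbN_nonneg H _ _ _) (prod_nonneg fun h _ => (hπ.2 h _ _ _).1 _)

/-- Both trajectory laws dominate `trajProb P' * ∏ q`; apply `abs_sum_mul_sub_sum_mul_le`, then
a union bound over the factors. -/
lemma IsPOMDP.abs_pvalue_sub_le (hM : IsPOMDP μ T Obs) {H : ℕ} (hH : 0 < H)
    {r : ℕ → St → Ac → ℝ} (hr0 : ∀ h x u, 0 ≤ r h x u) (hr1 : ∀ h x u, r h x u ≤ 1)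
    {P P' : GPolicy St Ob Ac} (hP : IsPolicy H P) (hP' : IsPolicy H P')
    {ι : Type*} (D : Finset ι) (q : ℕ × ι → Traj H St Ob Ac → ℝ)
    (hq0 : ∀ k t, 0 ≤ q k t) (hq1 : ∀ k t, q k t ≤ 1)
    (hstep : ∀ t : Traj H St Ob Ac, ∀ h < H,
      P' h (extN t.1) (extN t.2.1) (extN t.2.2) (extN t.2.2 h) * ∏ j ∈ D, q (h, j) t
        ≤ P h (extN t.1) (extN t.2.1) (extN t.2.2) (extN t.2.2 h)) :
    |pvalue H μ T Obs r P - pvalue H μ T Obs r P'|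
      ≤ H * ∑ k ∈ range H ×ˢ D, ∑ t, trajProb H μ T Obs P' t * (1 - q k t) := by
  have hP'0 := hM.trajProb_nonneg hP'
  have hQP : ∀ t, trajProb H μ T Obs P' t * ∏ k ∈ range H ×ˢ D, q k t
      ≤ trajProb H μ T Obs P t := fun t => by
    rw [prod_product]
    exact hM.trajProbN_mul_prod_le (fun h => prod_nonneg fun j _ => hq0 _ t)
      (fun h => (hP'.2 h _ _ _).1 _) (hstep t)
  have hQP' : ∀ t, trajProb H μ T Obs P' t * ∏ k ∈ range H ×ˢ D, q k t
      ≤ trajProb H μ T Obs P' t := fun t =>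
    mul_le_of_le_one_right (hP'0 t) (prod_le_one (fun k _ => hq0 k t) fun k _ => hq1 k t)
  have hP'sum := hM.sum_trajProb_eq_one hH hP'
  calc |pvalue H μ T Obs r P - pvalue H μ T Obs r P'|
      ≤ H * (1 - ∑ t, trajProb H μ T Obs P' t * ∏ k ∈ range H ×ˢ D, q k t) :=
        abs_sum_mul_sub_sum_mul_le (hM.sum_trajProb_eq_one hH hP) hP'sum hQP hQP'
          (fun t => sum_nonneg fun h _ => hr0 _ _ _)
          (fun t => (sum_le_sum fun h _ => hr1 _ _ _).trans_eq (by simp))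
    _ = H * ∑ t, trajProb H μ T Obs P' t * (1 - ∏ k ∈ range H ×ˢ D, q k t) := by
        simp only [mul_sub, mul_one, sum_sub_distrib, hP'sum]
    _ ≤ H * ∑ k ∈ range H ×ˢ D, ∑ t, trajProb H μ T Obs P' t * (1 - q k t) :=
        mul_le_mul_of_nonneg_left (sum_mul_one_sub_prod_le _ hP'0 _ q hq0 hq1) H.cast_nonneg

end Trajectories

section Agents

variable {St Ob C : Type*} {ι : Type*} {A : ι → Type*} {H : ℕ}

abbrev AgentPolicy (St Ob : Type*) (A : ι → Type*) (j : ι) : Type _ :=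
  ℕ → (ℕ → St) → (ℕ → Ob) → (ℕ → ∀ j, A j) → A j → ℝ

def IsAgentPolicy {j : ι} [Fintype (A j)] (H : ℕ) (σ : AgentPolicy St Ob A j) : Prop :=
  (∀ h < H, ∀ (s s' : ℕ → St) (o o' : ℕ → Ob) (a a' : ℕ → ∀ j, A j),
    (∀ k ≤ h, s k = s' k) → (∀ k ≤ h, o k = o' k) → (∀ k < h, a k = a' k) →
      σ h s o a = σ h s' o' a') ∧
  ∀ h s o a, (∀ b, 0 ≤ σ h s o a b) ∧ ∑ b, σ h s o a b = 1

def markovPolicy (π : ∀ j, ℕ → St → A j → ℝ) (j : ι) : AgentPolicy St Ob A j :=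
  fun h s _ _ => π j h (s h)

def infoPolicy {P : Type*} (fC : ℕ → (ℕ → Ob) → (ℕ → ∀ j, A j) → C)
    (fP : ℕ → (ℕ → Ob) → (ℕ → ∀ j, A j) → P) {j : ι} (ρ : ℕ → C → P → A j → ℝ) :
    AgentPolicy St Ob A j :=
  fun h _ o a => ρ h (fC h o a) (fP h o a)

def distill [Fintype St] {P B : Type*} (g : ℕ → C → P → St → ℝ) (πj : ℕ → St → B → ℝ) :
    ℕ → C → P → B → ℝ :=
  fun h c p b => ∑ x, g h c p x * πj h x b

def distilledPolicy [Fintype St] {PI : ι → Type*} (fC : ℕ → (ℕ → Ob) → (ℕ → ∀ j, A j) → C)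
    (fP : ∀ j, ℕ → (ℕ → Ob) → (ℕ → ∀ j, A j) → PI j) (gD : ∀ j, ℕ → C → PI j → St → ℝ)
    (π : ∀ j, ℕ → St → A j → ℝ) (j : ι) : AgentPolicy St Ob A j :=
  infoPolicy fC (fP j) (distill (gD j) (π j))

lemma isAgentPolicy_markovPolicy [∀ j, Fintype (A j)] {π : ∀ j, ℕ → St → A j → ℝ}
    (hπ0 : ∀ j h x b, 0 ≤ π j h x b) (hπs : ∀ j h x, ∑ b, π j h x b = 1) (j : ι) :
    IsAgentPolicy H (markovPolicy (Ob := Ob) π j) :=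
  ⟨fun h _ s s' _ _ _ _ hs _ _ => by simp only [markovPolicy, hs h le_rfl],
    fun h s _ _ => ⟨hπ0 j h (s h), hπs j h (s h)⟩⟩

lemma isAgentPolicy_infoPolicy {P : Type*} {fC : ℕ → (ℕ → Ob) → (ℕ → ∀ j, A j) → C}
    {fP : ℕ → (ℕ → Ob) → (ℕ → ∀ j, A j) → P} {j : ι} [Fintype (A j)] {ρ : ℕ → C → P → A j → ℝ}
    (hfC : ∀ h (o o' : ℕ → Ob) (a a' : ℕ → ∀ j, A j),
      (∀ k ≤ h, o k = o' k) → (∀ k < h, a k = a' k) → fC h o a = fC h o' a')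
    (hfP : ∀ h (o o' : ℕ → Ob) (a a' : ℕ → ∀ j, A j),
      (∀ k ≤ h, o k = o' k) → (∀ k < h, a k = a' k) → fP h o a = fP h o' a')
    (hρ : ∀ h c p, (∀ b, 0 ≤ ρ h c p b) ∧ ∑ b, ρ h c p b = 1) :
    IsAgentPolicy H (infoPolicy (St := St) fC fP ρ) :=
  ⟨fun h _ _ _ o o' a a' _ ho ha => by
      simp only [infoPolicy, hfC h o o' a a' ho ha, hfP h o o' a a' ho ha],
    fun h _ o a => hρ h (fC h o a) (fP h o a)⟩

lemma distill_isDistribution [Fintype St] {P B : Type*} [Fintype B] {g : ℕ → C → P → St → ℝ}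
    {πj : ℕ → St → B → ℝ} (hg0 : ∀ h c p x, 0 ≤ g h c p x) (hgs : ∀ h c p, ∑ x, g h c p x = 1)
    (hπ0 : ∀ h x b, 0 ≤ πj h x b) (hπs : ∀ h x, ∑ b, πj h x b = 1) (h : ℕ) (c : C) (p : P) :
    (∀ b, 0 ≤ distill g πj h c p b) ∧ ∑ b, distill g πj h c p b = 1 := by
  unfold distill
  refine ⟨fun b => sum_nonneg fun x _ => mul_nonneg (hg0 h c p x) (hπ0 h x b), ?_⟩
  rw [sum_comm]
  simp only [← mul_sum, hπs, mul_one, hgs]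

lemma prod_mul_prod_le_prod_distill [Fintype St] {PI : ι → Type*} (D : Finset ι)
    {g : ∀ j, ℕ → C → PI j → St → ℝ} {π : ∀ j, ℕ → St → A j → ℝ}
    (hg0 : ∀ j h c p x, 0 ≤ g j h c p x) (hπ0 : ∀ j h x b, 0 ≤ π j h x b)
    (h : ℕ) (c : C) (p : ∀ j, PI j) (x : St) (b : ∀ j, A j) :
    (∏ j ∈ D, π j h x (b j)) * ∏ j ∈ D, g j h c (p j) x
      ≤ ∏ j ∈ D, distill (g j) (π j) h c (p j) (b j) := by
  unfold distill
  rw [← prod_mul_distrib]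
  refine prod_le_prod (fun j _ => mul_nonneg (hπ0 _ _ _ _) (hg0 _ _ _ _ _)) fun j _ => ?_
  rw [mul_comm]
  exact single_le_sum (f := fun y => g j h c (p j) y * π j h y (b j))
    (fun y _ => mul_nonneg (hg0 _ _ _ _ _) (hπ0 _ _ _ _)) (mem_univ x)

def decodeProb [Inhabited St] [Inhabited Ob] [∀ j, Inhabited (A j)] {PI : ι → Type*}
    (fC : ℕ → (ℕ → Ob) → (ℕ → ∀ j, A j) → C) (fP : ∀ j, ℕ → (ℕ → Ob) → (ℕ → ∀ j, A j) → PI j)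
    (gD : ∀ j, ℕ → C → PI j → St → ℝ) (k : ℕ × ι) (t : Traj H St Ob (∀ j, A j)) : ℝ :=
  gD k.2 k.1 (fC k.1 (extN t.2.1) (extN t.2.2)) (fP k.2 k.1 (extN t.2.1) (extN t.2.2))
    (extN t.1 k.1)

lemma decodeProb_le_one [Fintype St] [Inhabited St] [Inhabited Ob] [∀ j, Inhabited (A j)]
    {PI : ι → Type*} {fC : ℕ → (ℕ → Ob) → (ℕ → ∀ j, A j) → C}
    {fP : ∀ j, ℕ → (ℕ → Ob) → (ℕ → ∀ j, A j) → PI j} {gD : ∀ j, ℕ → C → PI j → St → ℝ}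
    (hgD0 : ∀ j h c p x, 0 ≤ gD j h c p x) (hgDs : ∀ j h c p, ∑ x, gD j h c p x = 1)
    (k : ℕ × ι) (t : Traj H St Ob (∀ j, A j)) : decodeProb fC fP gD k t ≤ 1 :=
  (hgDs _ _ _ _).symm ▸ single_le_sum (fun x _ => hgD0 _ _ _ _ x) (mem_univ _)

lemma isAgentPolicy_distilledPolicy [Fintype St] [∀ j, Fintype (A j)] {PI : ι → Type*}
    {fC : ℕ → (ℕ → Ob) → (ℕ → ∀ j, A j) → C} {fP : ∀ j, ℕ → (ℕ → Ob) → (ℕ → ∀ j, A j) → PI j}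
    {gD : ∀ j, ℕ → C → PI j → St → ℝ} {π : ∀ j, ℕ → St → A j → ℝ}
    (hfC : ∀ h (o o' : ℕ → Ob) (a a' : ℕ → ∀ j, A j),
      (∀ k ≤ h, o k = o' k) → (∀ k < h, a k = a' k) → fC h o a = fC h o' a')
    (hfP : ∀ j h (o o' : ℕ → Ob) (a a' : ℕ → ∀ j, A j),
      (∀ k ≤ h, o k = o' k) → (∀ k < h, a k = a' k) → fP j h o a = fP j h o' a')
    (hgD0 : ∀ j h c p x, 0 ≤ gD j h c p x) (hgDs : ∀ j h c p, ∑ x, gD j h c p x = 1)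
    (hπ0 : ∀ j h x b, 0 ≤ π j h x b) (hπs : ∀ j h x, ∑ b, π j h x b = 1) (j : ι) :
    IsAgentPolicy H (distilledPolicy fC fP gD π j) :=
  isAgentPolicy_infoPolicy hfC (hfP j) (distill_isDistribution (hgD0 j) (hgDs j) (hπ0 j) (hπs j))

variable [Fintype ι]

def jointPolicy (σ : ∀ j, AgentPolicy St Ob A j) : GPolicy St Ob (∀ j, A j) :=
  fun h s o a b => ∏ j, σ j h s o a (b j)

variable [DecidableEq ι]

def deviationPolicy (i : ι) (ν : AgentPolicy St Ob A i) (σ : ∀ j, AgentPolicy St Ob A j) :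
    GPolicy St Ob (∀ j, A j) :=
  fun h s o a b => ν h s o a (b i) * ∏ j ∈ univ.erase i, σ j h s o a (b j)

lemma deviationPolicy_eq_jointPolicy_update (i : ι) (ν : AgentPolicy St Ob A i)
    (σ : ∀ j, AgentPolicy St Ob A j) :
    deviationPolicy i ν σ = jointPolicy (Function.update σ i ν) := by
  funext h s o a b
  rw [jointPolicy, ← mul_prod_erase univ _ (mem_univ i), Function.update_self]
  exact congrArg _ (prod_congr rfl fun j hj => by rw [Function.update_of_ne (ne_of_mem_erase hj)])

lemma jointPolicy_eq_deviationPolicy (i : ι) (σ : ∀ j, AgentPolicy St Ob A j) :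
    jointPolicy σ = deviationPolicy i (σ i) σ := by
  rw [deviationPolicy_eq_jointPolicy_update, Function.update_eq_self]

lemma IsPolicy.jointPolicy [∀ j, Fintype (A j)] {σ : ∀ j, AgentPolicy St Ob A j}
    (hσ : ∀ j, IsAgentPolicy H (σ j)) : IsPolicy H (jointPolicy σ) := by
  refine ⟨fun h hh s s' o o' a a' hs ho ha => ?_, fun h s o a => ⟨fun b => ?_, ?_⟩⟩
  · funext b
    exact prod_congr rfl fun j _ => congrFun ((hσ j).1 h hh s s' o o' a a' hs ho ha) (b j)
  · exact prod_nonneg fun j _ => ((hσ j).2 h s o a).1 _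
  · unfold _root_.jointPolicy
    rw [← Fintype.prod_sum]
    exact prod_eq_one fun j _ => ((hσ j).2 h s o a).2

lemma IsPolicy.deviationPolicy [∀ j, Fintype (A j)] {i : ι} {ν : AgentPolicy St Ob A i}
    {σ : ∀ j, AgentPolicy St Ob A j} (hν : IsAgentPolicy H ν) (hσ : ∀ j, IsAgentPolicy H (σ j)) :
    IsPolicy H (deviationPolicy i ν σ) := by
  rw [deviationPolicy_eq_jointPolicy_update]
  refine IsPolicy.jointPolicy fun j => ?_
  rcases eq_or_ne j i with rfl | hne
  · rwa [Function.update_self]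
  · rw [Function.update_of_ne hne]
    exact hσ j

/-- On reachable trajectories the state is `trueφ` of each agent's information, so `π` is the
information-based deviation in which agent `i` plays `π i` on the filtered state. -/
lemma trajProb_jointPolicy_markovPolicy_eq [Inhabited St] [Inhabited Ob] [∀ j, Inhabited (A j)]
    {μ : St → ℝ} {T : ℕ → St → (∀ j, A j) → St → ℝ} {Obs : ℕ → St → Ob → ℝ} {PI : ι → Type*}
    {fC : ℕ → (ℕ → Ob) → (ℕ → ∀ j, A j) → C} {fP : ∀ j, ℕ → (ℕ → Ob) → (ℕ → ∀ j, A j) → PI j}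
    {π : ∀ j, ℕ → St → A j → ℝ} {trueφ : ∀ j, ℕ → C → PI j → St}
    (hdf : ∀ (s : ℕ → St) (o : ℕ → Ob) (a : ℕ → ∀ j, A j), modelProbN H μ T Obs s o a ≠ 0 →
      ∀ j, ∀ h < H, s h = trueφ j h (fC h o a) (fP j h o a))
    (i : ι) (t : Traj H St Ob (∀ j, A j)) :
    trajProb H μ T Obs (jointPolicy (markovPolicy π)) t =
      trajProb H μ T Obs (deviationPolicy i
        (infoPolicy fC (fP i) fun h c p => π i h (trueφ i h c p)) (markovPolicy π)) t := by
  rw [jointPolicy_eq_deviationPolicy i]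
  refine trajProbN_congr_of_reachable fun hm h hh => ?_
  simp only [deviationPolicy, markovPolicy, infoPolicy]
  rw [← hdf _ _ _ hm i h hh]

end Agents

section Distillation

variable {St Ob C : Type*} {ι : Type*} [Fintype ι] [DecidableEq ι] {A : ι → Type*}
  {PI : ι → Type*} [Fintype St] [Fintype Ob] [∀ j, Fintype (A j)]
  [Inhabited St] [Inhabited Ob] [∀ j, Inhabited (A j)] {H : ℕ} {μ : St → ℝ}
  {T : ℕ → St → (∀ j, A j) → St → ℝ} {Obs : ℕ → St → Ob → ℝ}
  {fC : ℕ → (ℕ → Ob) → (ℕ → ∀ j, A j) → C} {fP : ∀ j, ℕ → (ℕ → Ob) → (ℕ → ∀ j, A j) → PI j}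
  {gD : ∀ j, ℕ → C → PI j → St → ℝ} {π : ∀ j, ℕ → St → A j → ℝ}

lemma IsPOMDP.decodingError_nonneg (hM : IsPOMDP μ T Obs) {P : GPolicy St Ob (∀ j, A j)}
    (hP : IsPolicy H P) (hgD0 : ∀ j h c p x, 0 ≤ gD j h c p x)
    (hgDs : ∀ j h c p, ∑ x, gD j h c p x = 1) (k : ℕ × ι) :
    0 ≤ ∑ t, trajProb H μ T Obs P t * (1 - decodeProb fC fP gD k t) :=
  sum_nonneg fun t _ =>
    mul_nonneg (hM.trajProb_nonneg hP t) (sub_nonneg.2 (decodeProb_le_one hgD0 hgDs k t))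

lemma IsPOMDP.abs_pvalue_deviationPolicy_distilled_sub_le (hM : IsPOMDP μ T Obs) (hH : 0 < H)
    {r : ℕ → St → (∀ j, A j) → ℝ} (hr0 : ∀ h x u, 0 ≤ r h x u) (hr1 : ∀ h x u, r h x u ≤ 1)
    (hgD0 : ∀ j h c p x, 0 ≤ gD j h c p x) (hgDs : ∀ j h c p, ∑ x, gD j h c p x = 1)
    (hπ0 : ∀ j h x b, 0 ≤ π j h x b) {i : ι} {ν : AgentPolicy St Ob A i}
    (hν : IsAgentPolicy H ν) (hdistilled : ∀ j, IsAgentPolicy H (distilledPolicy fC fP gD π j))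
    (hmarkov : ∀ j, IsAgentPolicy H (markovPolicy (Ob := Ob) π j)) {E : ℝ} (hE0 : 0 ≤ E)
    (hE : ∀ j, ∀ h < H, ∑ t, trajProb H μ T Obs (deviationPolicy i ν (markovPolicy π)) t *
      (1 - decodeProb fC fP gD (h, j) t) ≤ E) :
    |pvalue H μ T Obs r (deviationPolicy i ν (distilledPolicy fC fP gD π)) -
      pvalue H μ T Obs r (deviationPolicy i ν (markovPolicy π))|
      ≤ H * (Fintype.card ι * H * E) := by
  refine (hM.abs_pvalue_sub_le hH hr0 hr1 (IsPolicy.deviationPolicy hν hdistilled)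
    (IsPolicy.deviationPolicy hν hmarkov) (univ.erase i) (decodeProb fC fP gD)
    (fun _ _ => hgD0 _ _ _ _ _)
    (decodeProb_le_one hgD0 hgDs) fun t h _ => ?_).trans ?_
  · rw [deviationPolicy, deviationPolicy, mul_assoc]
    exact mul_le_mul_of_nonneg_left (prod_mul_prod_le_prod_distill _ hgD0 hπ0 h
      (fC h (extN t.2.1) (extN t.2.2)) (fun j => fP j h (extN t.2.1) (extN t.2.2)) (extN t.1 h)
      (extN t.2.2 h)) ((hν.2 _ _ _ _).1 _)
  · refine mul_le_mul_of_nonneg_left (sum_product_le_card_mul _ hE0 fun k hk => ?_) H.cast_nonneg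
    exact hE k.2 k.1 (mem_range.1 (mem_product.1 hk).1)

lemma IsPOMDP.abs_pvalue_jointPolicy_distilled_sub_le (hM : IsPOMDP μ T Obs) (hH : 0 < H)
    {r : ℕ → St → (∀ j, A j) → ℝ} (hr0 : ∀ h x u, 0 ≤ r h x u) (hr1 : ∀ h x u, r h x u ≤ 1)
    (hgD0 : ∀ j h c p x, 0 ≤ gD j h c p x) (hgDs : ∀ j h c p, ∑ x, gD j h c p x = 1)
    (hπ0 : ∀ j h x b, 0 ≤ π j h x b)
    (hdistilled : ∀ j, IsAgentPolicy H (distilledPolicy fC fP gD π j))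
    (hmarkov : ∀ j, IsAgentPolicy H (markovPolicy (Ob := Ob) π j)) {E : ℝ} (hE0 : 0 ≤ E)
    (hE : ∀ j, ∀ h < H, ∑ t, trajProb H μ T Obs (jointPolicy (markovPolicy π)) t *
      (1 - decodeProb fC fP gD (h, j) t) ≤ E) :
    |pvalue H μ T Obs r (jointPolicy (distilledPolicy fC fP gD π)) -
      pvalue H μ T Obs r (jointPolicy (markovPolicy π))|
      ≤ H * (Fintype.card ι * H * E) := by
  refine (hM.abs_pvalue_sub_le hH hr0 hr1 (IsPolicy.jointPolicy hdistilled)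
    (IsPolicy.jointPolicy hmarkov) univ (decodeProb fC fP gD) (fun _ _ => hgD0 _ _ _ _ _)
    (decodeProb_le_one hgD0 hgDs) fun t h _ => ?_).trans ?_
  · exact prod_mul_prod_le_prod_distill _ hgD0 hπ0 h (fC h (extN t.2.1) (extN t.2.2))
      (fun j => fP j h (extN t.2.1) (extN t.2.2)) (extN t.1 h) (extN t.2.2 h)
  · refine mul_le_mul_of_nonneg_left (sum_product_le_card_mul _ hE0 fun k hk => ?_) H.cast_nonneg
    exact hE k.2 k.1 (mem_range.1 (mem_product.1 hk).1)

end Distillation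

/-- Equilibrium distillation bound for the NE/CCE gap: in a POSG
satisfying the deterministic filter condition, given a joint Markov state-based
policy `π` and (possibly stochastic) decoding functions `gD`, if `G` upper-bounds
the NE/CCE gap of `π` (over information-based unilateral deviations) and `E`
upper-bounds the per-step decoding error probability of every agent's decoder
under every unilateral deviation from `π`, then the NE/CCE gap of the distilled
policy `π^gD` is at most `G + 2 n H² E`. -/
theorem stmt_14 {St Ob C : Type*} {n : ℕ} {AcI : Fin n → Type*} {PI : Fin n → Type*}
    [Fintype St] [Fintype Ob] [∀ i, Fintype (AcI i)]
    [Inhabited St] [Inhabited Ob] [∀ i, Inhabited (AcI i)]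
    (H : ℕ) (hH : 0 < H)
    (μ : St → ℝ) (T : ℕ → St → (∀ i, AcI i) → St → ℝ) (Obs : ℕ → St → Ob → ℝ)
    (hμ0 : ∀ x, 0 ≤ μ x) (hμs : ∑ x, μ x = 1)
    (hT0 : ∀ h x u y, 0 ≤ T h x u y) (hTs : ∀ h x u, ∑ y, T h x u y = 1)
    (hO0 : ∀ h x o, 0 ≤ Obs h x o) (hOs : ∀ h x, ∑ o, Obs h x o = 1)
    (fC : ℕ → (ℕ → Ob) → (ℕ → ∀ i, AcI i) → C)
    (fP : ∀ i : Fin n, ℕ → (ℕ → Ob) → (ℕ → ∀ i, AcI i) → PI i)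
    (hfC : ∀ h (o o' : ℕ → Ob) (a a' : ℕ → ∀ i, AcI i),
      (∀ k, k ≤ h → o k = o' k) → (∀ k, k < h → a k = a' k) → fC h o a = fC h o' a')
    (hfP : ∀ i h (o o' : ℕ → Ob) (a a' : ℕ → ∀ i, AcI i),
      (∀ k, k ≤ h → o k = o' k) → (∀ k, k < h → a k = a' k) → fP i h o a = fP i h o' a')
    (r : Fin n → ℕ → St → (∀ i, AcI i) → ℝ)
    (hr0 : ∀ i h x u, 0 ≤ r i h x u) (hr1 : ∀ i h x u, r i h x u ≤ 1)
    (π : ∀ i : Fin n, ℕ → St → AcI i → ℝ)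
    (hπ0 : ∀ i h x b, 0 ≤ π i h x b) (hπs : ∀ i h x, ∑ b, π i h x b = 1)
    -- deterministic filter condition
    (trueφ : ∀ i : Fin n, ℕ → C → PI i → St)
    (hdf : ∀ (s : ℕ → St) (o : ℕ → Ob) (a : ℕ → ∀ i, AcI i),
      modelProbN H μ T Obs s o a ≠ 0 →
        ∀ i : Fin n, ∀ h, h < H → s h = trueφ i h (fC h o a) (fP i h o a))
    -- possibly stochastic decoding functions
    (gD : ∀ i : Fin n, ℕ → C → PI i → St → ℝ)
    (hgD0 : ∀ i h c p x, 0 ≤ gD i h c p x) (hgDs : ∀ i h c p, ∑ x, gD i h c p x = 1)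
    (E G : ℝ)
    -- `E` bounds the decoding error probability of every decoder `gD j` at every
    -- step under every unilateral information-based deviation `u_i × π_{-i}`
    (hE : ∀ i : Fin n, ∀ u : ℕ → C → PI i → AcI i → ℝ,
      (∀ h c p, (∀ b, 0 ≤ u h c p b) ∧ ∑ b, u h c p b = 1) →
      ∀ j : Fin n, ∀ h, h < H →
        (∑ t : Traj H St Ob (∀ i, AcI i),
          trajProb H μ T Obs
            (fun h' s o a b => u h' (fC h' o a) (fP i h' o a) (b i) *
              ∏ j' ∈ Finset.univ.erase i, π j' h' (s h') (b j')) t *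
          (1 - gD j h (fC h (extN t.2.1) (extN t.2.2)) (fP j h (extN t.2.1) (extN t.2.2))
                (extN t.1 h))) ≤ E)
    -- `G` bounds the NE/CCE gap of `π`
    (hG : ∀ i : Fin n, ∀ u : ℕ → C → PI i → AcI i → ℝ,
      (∀ h c p, (∀ b, 0 ≤ u h c p b) ∧ ∑ b, u h c p b = 1) →
      pvalue H μ T Obs (r i)
          (fun h' s o a b => u h' (fC h' o a) (fP i h' o a) (b i) *
            ∏ j' ∈ Finset.univ.erase i, π j' h' (s h') (b j')) -
        pvalue H μ T Obs (r i) (fun h' s _o _a b => ∏ j, π j h' (s h') (b j)) ≤ G) :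
    -- conclusion: the NE/CCE gap of the distilled policy `π^gD` is ≤ G + 2 n H² E
    ∀ i : Fin n, ∀ u : ℕ → C → PI i → AcI i → ℝ,
      (∀ h c p, (∀ b, 0 ≤ u h c p b) ∧ ∑ b, u h c p b = 1) →
      pvalue H μ T Obs (r i)
          (fun h' _s o a b => u h' (fC h' o a) (fP i h' o a) (b i) *
            ∏ j' ∈ Finset.univ.erase i,
              ∑ x, gD j' h' (fC h' o a) (fP j' h' o a) x * π j' h' x (b j')) -
        pvalue H μ T Obs (r i)
          (fun h' _s o a b => ∏ j, ∑ x, gD j h' (fC h' o a) (fP j h' o a) x * π j h' x (b j)) ≤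
      G + 2 * n * H ^ 2 * E := by
  intro i u hu
  have hM : IsPOMDP μ T Obs := ⟨hμ0, hμs, hT0, hTs, hO0, hOs⟩
  have hν := isAgentPolicy_infoPolicy (St := St) (H := H) hfC (hfP i) hu
  have hdistilled := isAgentPolicy_distilledPolicy (H := H) hfC hfP hgD0 hgDs hπ0 hπs
  have hmarkov := isAgentPolicy_markovPolicy (H := H) (Ob := Ob) hπ0 hπs
  have hE0 : 0 ≤ E := (hM.decodingError_nonneg (IsPolicy.deviationPolicy hν hmarkov) hgD0 hgDs
    (0, i)).trans (hE i u hu i 0 hH)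
  have hdev := hM.abs_pvalue_deviationPolicy_distilled_sub_le hH (hr0 i) (hr1 i) hgD0 hgDs hπ0
    hν hdistilled hmarkov hE0 (hE i u hu)
  have hjoint := hM.abs_pvalue_jointPolicy_distilled_sub_le hH (hr0 i) (hr1 i) hgD0 hgDs hπ0
    hdistilled hmarkov hE0 fun j h hh => by
      simp only [trajProb_jointPolicy_markovPolicy_eq hdf i]
      exact hE i _ (fun h c p => ⟨hπ0 i h _, hπs i h _⟩) j h hh
  have hgap : pvalue H μ T Obs (r i) (deviationPolicy i (infoPolicy fC (fP i) u) (markovPolicy π)) -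
      pvalue H μ T Obs (r i) (jointPolicy (markovPolicy π)) ≤ G := hG i u hu
  show pvalue H μ T Obs (r i) (deviationPolicy i (infoPolicy fC (fP i) u)
      (distilledPolicy fC fP gD π)) -
    pvalue H μ T Obs (r i) (jointPolicy (distilledPolicy fC fP gD π)) ≤ G + 2 * n * H ^ 2 * E
  rw [Fintype.card_fin] at hdev hjoint
  have hsplit : (2 * n * H ^ 2 * E : ℝ) = H * (n * H * E) + H * (n * H * E) := by ring
  linarith [(abs_le.1 hdev).2, (abs_le.1 hjoint).1]
end
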